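/- arXiv:1303.5473 — 7 statements merged into one kernel-verified Lean document; each statement's English description precedes it below -/
import Mathlib

section
/- Let P be a finite set of points in the plane in general position and let s, t ∈ P with t ∈ C₀(s). If the top-right quadrant of S_t(s) (i.e., the intersection of S_t(s) with {q : qₓ > tₓ and q_y > t_y}) is empty and s is t-protected (equivalently, C₁(s) contains no point of P on or below ℓ⁻_t), then there is a path from s to t in the θ₄-graph of P of length at most 18·‖s−t‖₁. -/
open scoped BigOperators

/-- Euclidean distance between two points of the plane. -/
noncomputable def dist2 (p q : ℝ × ℝ) : ℝ := Real.sqrt ((p.1 - q.1) ^ 2 + (p.2 - q.2) ^ 2)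

/-- `L₁` distance between two points of the plane. -/
def dist1 (p q : ℝ × ℝ) : ℝ := |p.1 - q.1| + |p.2 - q.2|

/-- `L∞` distance between two points of the plane (half the side of `S_t(s)`). -/
def distInf (p q : ℝ × ℝ) : ℝ := max |p.1 - q.1| |p.2 - q.2|

/-- `cone i p q` : the point `q` lies in the open cone (quadrant) `C_i(p)`. -/
def cone (i : ℕ) (p q : ℝ × ℝ) : Prop :=
  if i = 0 then p.1 < q.1 ∧ q.2 < p.2
  else if i = 1 then p.1 < q.1 ∧ p.2 < q.2
  else if i = 2 then q.1 < p.1 ∧ p.2 < q.2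
  else q.1 < p.1 ∧ q.2 < p.2

/-- General position: no two points of `P` on a common vertical line, horizontal line,
or line of slope `+1` or `-1`. -/
def GenPos (P : Finset (ℝ × ℝ)) : Prop :=
  ∀ p ∈ P, ∀ q ∈ P, p ≠ q →
    p.1 ≠ q.1 ∧ p.2 ≠ q.2 ∧ p.2 - p.1 ≠ q.2 - q.1 ∧ p.2 + p.1 ≠ q.2 + q.1

/-- `IsNbr P i p q` : `q = n_i(p)`, i.e. `q` is a point of `P` in `C_i(p)` minimizing
the `L₁`-distance to `p`. -/
def IsNbr (P : Finset (ℝ × ℝ)) (i : ℕ) (p q : ℝ × ℝ) : Prop :=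
  q ∈ P ∧ cone i p q ∧ ∀ r ∈ P, cone i p r → dist1 p q ≤ dist1 p r

/-- Adjacency in the θ₄-graph of `P`. -/
def Theta4Adj (P : Finset (ℝ × ℝ)) (p q : ℝ × ℝ) : Prop :=
  p ∈ P ∧ q ∈ P ∧ ∃ i < 4, (IsNbr P i p q ∨ IsNbr P i q p)

/-- A walk with `k` edges in the θ₄-graph of `P`, given by its vertices `v 0, …, v k`. -/
def IsTheta4Path (P : Finset (ℝ × ℝ)) (k : ℕ) (v : ℕ → ℝ × ℝ) : Prop :=
  v 0 ∈ P ∧ ∀ j < k, Theta4Adj P (v j) (v (j + 1))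

/-- The Euclidean length of a path with `k` edges. -/
noncomputable def pathLength (k : ℕ) (v : ℕ → ℝ × ℝ) : ℝ :=
  ∑ j ∈ Finset.range k, dist2 (v j) (v (j + 1))

/-- `p` is `t`-protected: no point of `P` lying in `C₁(p)` is on or below the line `ℓ⁻_t`
of slope `-1` through `t`. -/
def TProtected (P : Finset (ℝ × ℝ)) (t p : ℝ × ℝ) : Prop :=
  ∀ q ∈ P, cone 1 p q → t.1 + t.2 < q.1 + q.2


/-! ### Auxiliary lemmas for the proof of `one_empty_quadrant` -/

attribute [local instance] Classical.propDecidable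

lemma cone0_iff (p q : ℝ × ℝ) : cone 0 p q ↔ p.1 < q.1 ∧ q.2 < p.2 := by simp [cone]

lemma cone1_iff (p q : ℝ × ℝ) : cone 1 p q ↔ p.1 < q.1 ∧ p.2 < q.2 := by norm_num [cone]

lemma cone2_iff (p q : ℝ × ℝ) : cone 2 p q ↔ q.1 < p.1 ∧ p.2 < q.2 := by norm_num [cone]

lemma dist2_le_dist1 (p q : ℝ × ℝ) : dist2 p q ≤ dist1 p q := by
  unfold dist2 dist1
  have h : (p.1 - q.1) ^ 2 + (p.2 - q.2) ^ 2 ≤ (|p.1 - q.1| + |p.2 - q.2|) ^ 2 := by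
    nlinarith [sq_abs (p.1 - q.1), sq_abs (p.2 - q.2),
      mul_nonneg (abs_nonneg (p.1 - q.1)) (abs_nonneg (p.2 - q.2))]
  calc Real.sqrt ((p.1 - q.1) ^ 2 + (p.2 - q.2) ^ 2)
      ≤ Real.sqrt ((|p.1 - q.1| + |p.2 - q.2|) ^ 2) := Real.sqrt_le_sqrt h
    _ = |p.1 - q.1| + |p.2 - q.2| := by
        rw [Real.sqrt_sq (by positivity)]

/-- `dist1` evaluated when `q` is in the cone `C₀(p)`. -/
lemma d1_c0 {p q : ℝ × ℝ} (h1 : p.1 < q.1) (h2 : q.2 < p.2) :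
    dist1 p q = (q.1 - p.1) + (p.2 - q.2) := by
  unfold dist1
  rw [abs_of_neg (by linarith : p.1 - q.1 < 0), abs_of_pos (by linarith : (0:ℝ) < p.2 - q.2)]
  ring

/-- `dist1` evaluated when `q` is in the cone `C₁(p)`. -/
lemma d1_c1 {p q : ℝ × ℝ} (h1 : p.1 < q.1) (h2 : p.2 < q.2) :
    dist1 p q = (q.1 - p.1) + (q.2 - p.2) := by
  unfold dist1
  rw [abs_of_neg (by linarith : p.1 - q.1 < 0), abs_of_neg (by linarith : p.2 - q.2 < 0)]
  ring

/-- `dist1` evaluated when `q` is in the cone `C₂(p)`. -/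
lemma d1_c2 {p q : ℝ × ℝ} (h1 : q.1 < p.1) (h2 : p.2 < q.2) :
    dist1 p q = (p.1 - q.1) + (q.2 - p.2) := by
  unfold dist1
  rw [abs_of_pos (by linarith : (0:ℝ) < p.1 - q.1), abs_of_neg (by linarith : p.2 - q.2 < 0)]
  ring

lemma exists_isNbr (P : Finset (ℝ × ℝ)) (i : ℕ) (p w : ℝ × ℝ) (hw : w ∈ P)
    (hcw : cone i p w) : ∃ q, IsNbr P i p q := by
  classical
  have hne : (P.filter (fun r => cone i p r)).Nonempty :=
    ⟨w, Finset.mem_filter.mpr ⟨hw, hcw⟩⟩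
  obtain ⟨q, hq, hmin⟩ := Finset.exists_min_image (P.filter (fun r => cone i p r))
    (fun r => dist1 p r) hne
  rw [Finset.mem_filter] at hq
  exact ⟨q, hq.1, hq.2, fun r hr hcr => hmin r (Finset.mem_filter.mpr ⟨hr, hcr⟩)⟩

lemma adj_of_nbr {P : Finset (ℝ × ℝ)} {i : ℕ} {p q : ℝ × ℝ} (hp : p ∈ P)
    (h : IsNbr P i p q) (hi : i < 4) : Theta4Adj P p q :=
  ⟨hp, h.1, i, hi, Or.inl h⟩

lemma path_single {P : Finset (ℝ × ℝ)} {t : ℝ × ℝ} (ht : t ∈ P) :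
    ∃ k v, IsTheta4Path P k v ∧ v 0 = t ∧ v k = t ∧ pathLength k v = 0 := by
  refine ⟨0, fun _ => t, ⟨ht, ?_⟩, rfl, rfl, ?_⟩
  · intro j hj; exact absurd hj (Nat.not_lt_zero j)
  · simp [pathLength]

lemma path_cons {P : Finset (ℝ × ℝ)} {x y t : ℝ × ℝ} (hadj : Theta4Adj P x y)
    {k : ℕ} {v : ℕ → ℝ × ℝ} (hpath : IsTheta4Path P k v) (h0 : v 0 = y) (hk : v k = t) :
    ∃ k' v', IsTheta4Path P k' v' ∧ v' 0 = x ∧ v' k' = t ∧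
      pathLength k' v' = dist2 x y + pathLength k v := by
  refine ⟨k + 1, fun j => if j = 0 then x else v (j - 1), ⟨?_, ?_⟩, by simp, ?_, ?_⟩
  · simpa using hadj.1
  · intro j hj
    match j with
    | 0 => simpa [h0] using hadj
    | Nat.succ i =>
      have hi : i < k := by omega
      simpa using hpath.2 i hi
  · simpa using hk
  · unfold pathLength
    rw [Finset.sum_range_succ']
    have e1 : ∀ i ∈ Finset.range k,
        dist2 (if i + 1 = 0 then x else v (i + 1 - 1))
          (if i + 1 + 1 = 0 then x else v (i + 1 + 1 - 1)) = dist2 (v i) (v (i + 1)) := by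
      intro i _; simp
    rw [Finset.sum_congr rfl e1]
    simp [h0]
    ring

open Classical in
/-- The induction measure: the number of points of `P` in the closed square centered at `t`
containing `cur`. -/
noncomputable def Msr (P : Finset (ℝ × ℝ)) (t cur : ℝ × ℝ) : ℕ :=
  (P.filter (fun y => distInf y t ≤ distInf cur t)).card

lemma msr_lt {P : Finset (ℝ × ℝ)} {t cur next : ℝ × ℝ} (hc : cur ∈ P)
    (h : distInf next t < distInf cur t) : Msr P t next < Msr P t cur := by
  classical
  unfold Msr
  apply Finset.card_lt_card
  rw [Finset.ssubset_iff_of_subset]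
  · exact ⟨cur, Finset.mem_filter.mpr ⟨hc, le_refl _⟩, by
      intro hmem
      rw [Finset.mem_filter] at hmem
      exact absurd (hmem.2.trans_lt h) (lt_irrefl _)⟩
  · intro y hy
    rw [Finset.mem_filter] at hy ⊢
    exact ⟨hy.1, hy.2.trans h.le⟩

/-- The invariants carried along the greedy walk. -/
structure WInv (P : Finset (ℝ × ℝ)) (s t cur ℓ : ℝ × ℝ) (κ R H FLOOR : ℝ) : Prop where
  curP : cur ∈ P
  lP : ℓ ∈ P
  lx : ℓ.1 < t.1
  ly : t.2 < ℓ.2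
  lprot : TProtected P t ℓ
  lxs : s.1 ≤ ℓ.1
  kpos : 0 ≤ κ
  Rpos : 0 ≤ R
  Hpos : 0 ≤ H
  J2 : ∀ w ∈ P, ℓ.1 < w.1 → w.1 < t.1 → t.2 < w.2 → w.1 + w.2 < t.1 + t.2 → dist1 w t ≤ κ
  J3 : ∀ w ∈ P, t.1 < w.1 → w.2 < t.2 → FLOOR < w.2 → w.1 + w.2 < t.1 + t.2 → dist1 w t ≤ R
  J5 : cur.1 < t.1 → t.2 < cur.2 → TProtected P t cur → dist1 cur t ≤ κ
  J7 : t.1 < cur.1 → cur.2 < t.2 → TProtected P t cur → dist1 cur t ≤ R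
  J6 : t.1 - (t.2 - FLOOR) ≤ cur.1
  J13 : ℓ.1 ≤ cur.1
  J10 : H ≤ t.1 - ℓ.1
  J11 : t.2 - H ≤ cur.2
  J12 : FLOOR < cur.2
  J14 : ¬(t.1 < cur.1 ∧ t.2 < cur.2)
  J16 : cur.1 < t.1 + (t.1 - s.1)
  J17 : cur.2 ≤ s.2
  JF : FLOOR < t.2

/-- The main induction: following the greedy walk toward `t`, with potential accounting. -/
lemma master (P : Finset (ℝ × ℝ)) (hP : GenPos P) (s t : ℝ × ℝ) (hs : s ∈ P) (ht : t ∈ P)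
    (ha : s.1 < t.1) (hb : t.2 < s.2)
    (hWa : t.1 - s.1 ≤ distInf s t) (hWb : s.2 - t.2 ≤ distInf s t)
    (hempty : ∀ q ∈ P,
      ¬ (t.1 < q.1 ∧ q.1 < t.1 + distInf s t ∧ t.2 < q.2 ∧ q.2 < t.2 + distInf s t))
    (hprot : TProtected P t s) :
    ∀ n : ℕ, ∀ cur ℓ : ℝ × ℝ, ∀ κ R H FLOOR : ℝ,
      WInv P s t cur ℓ κ R H FLOOR → Msr P t cur ≤ n →
      ∃ k v, IsTheta4Path P k v ∧ v 0 = cur ∧ v k = t ∧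
        pathLength k v ≤ (t.1 + t.2 - cur.1 - cur.2) + 2*κ + 2*R := by
  intro n
  induction n with
  | zero =>
    intro cur ℓ κ R H FLOOR hI hn
    exfalso
    have hmem : cur ∈ P.filter (fun y => distInf y t ≤ distInf cur t) :=
      Finset.mem_filter.mpr ⟨hI.curP, le_refl _⟩
    have hpos := Finset.card_pos.mpr ⟨cur, hmem⟩
    unfold Msr at hn
    omega
  | succ n ih =>
    intro cur ℓ κ R H FLOOR hI hn
    by_cases hct : cur = t
    · subst hct
      obtain ⟨k, v, hp, h0, hk, hl⟩ := path_single ht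
      exact ⟨k, v, hp, h0, hk, by
        rw [hl]; have := hI.kpos; have := hI.Rpos; linarith⟩
    obtain ⟨hx_ne, hy_ne, hasum_ne, hsum_ne⟩ := hP cur hI.curP t ht hct
    have W1a : cur.1 - t.1 ≤ distInf cur t := by
      unfold distInf
      have h1 := le_abs_self (cur.1 - t.1)
      have h2 := le_max_left |cur.1 - t.1| |cur.2 - t.2|
      linarith
    have W1b : t.1 - cur.1 ≤ distInf cur t := by
      unfold distInf
      have h1 := neg_le_abs (cur.1 - t.1)
      have h2 := le_max_left |cur.1 - t.1| |cur.2 - t.2|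
      linarith
    have W2a : cur.2 - t.2 ≤ distInf cur t := by
      unfold distInf
      have h1 := le_abs_self (cur.2 - t.2)
      have h2 := le_max_right |cur.1 - t.1| |cur.2 - t.2|
      linarith
    have W2b : t.2 - cur.2 ≤ distInf cur t := by
      unfold distInf
      have h1 := neg_le_abs (cur.2 - t.2)
      have h2 := le_max_right |cur.1 - t.1| |cur.2 - t.2|
      linarith
    have hJ13 : ℓ.1 ≤ cur.1 := hI.J13
    have hsx : s.1 ≤ cur.1 := le_trans hI.lxs hJ13
    -- the generic `n₁`-step of the walk
    have key : ∀ y : ℝ × ℝ, IsNbr P 1 cur y → y ≠ t → y.1 + y.2 < t.1 + t.2 →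
        ∃ k v, IsTheta4Path P k v ∧ v 0 = cur ∧ v k = t ∧
          pathLength k v ≤ (t.1 + t.2 - cur.1 - cur.2) + 2*κ + 2*R := by
      intro y hnbr hyt hsumy
      obtain ⟨hyP, hyc0, hymin⟩ := hnbr
      have hyc := (cone1_iff cur y).mp hyc0
      obtain ⟨hyx, hyy⟩ := hyc
      have hd1y : dist1 cur y = (y.1 - cur.1) + (y.2 - cur.2) := d1_c1 hyx hyy
      have hInv' : WInv P s t y ℓ κ R H FLOOR :=
        { curP := hyP
          lP := hI.lP
          lx := hI.lx
          ly := hI.ly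
          lprot := hI.lprot
          lxs := hI.lxs
          kpos := hI.kpos
          Rpos := hI.Rpos
          Hpos := hI.Hpos
          J2 := hI.J2
          J3 := hI.J3
          J5 := by
            intro h1 h2 _
            exact hI.J2 y hyP (by linarith) h1 h2 hsumy
          J7 := by
            intro h1 h2 _
            exact hI.J3 y hyP h1 h2 (by have := hI.J12; linarith) hsumy
          J6 := by have := hI.J6; linarith
          J13 := by linarith
          J10 := hI.J10
          J11 := by have := hI.J11; linarith
          J12 := by have := hI.J12; linarith
          J14 := by rintro ⟨h1, h2⟩; linarith
          J16 := by
            rcases le_or_gt y.1 t.1 with h | h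
            · linarith
            · have h11 := hI.J11
              have h10 := hI.J10
              have hxs := hI.lxs
              linarith
          J17 := by
            rcases le_or_gt y.2 t.2 with h | h
            · linarith
            · by_contra hcon
              push_neg at hcon
              have hpy := hprot y hyP ((cone1_iff s y).mpr ⟨by linarith, by linarith⟩)
              linarith
          JF := hI.JF }
      have hmlt : distInf y t < distInf cur t := by
        have e : distInf y t = max |y.1 - t.1| |y.2 - t.2| := rfl
        rw [e]
        apply max_lt
        · rw [abs_lt]
          exact ⟨by linarith, by linarith⟩
        · rw [abs_lt]
          exact ⟨by linarith, by linarith⟩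
      obtain ⟨k, v, hp, h0, hk, hlen⟩ := ih y ℓ κ R H FLOOR hInv'
        (by have := msr_lt hI.curP hmlt; omega)
      have hadj : Theta4Adj P cur y := adj_of_nbr hI.curP ⟨hyP, hyc0, hymin⟩ (by norm_num)
      obtain ⟨k', v', hp', h0', hk', hlen'⟩ := path_cons hadj hp h0 hk
      refine ⟨k', v', hp', h0', hk', ?_⟩
      rw [hlen']
      have hc2 := dist2_le_dist1 cur y
      rw [hd1y] at hc2
      linarith
    rcases lt_or_gt_of_ne hx_ne with hxlt | hxgt
    · rcases lt_or_gt_of_ne hy_ne with hylt | hygt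
      · -- `cur ∈ C₃(t)` : take the `n₁`-neighbour
        have hconet : cone 1 cur t := (cone1_iff cur t).mpr ⟨hxlt, hylt⟩
        obtain ⟨y, hyP, hyc0, hymin⟩ := exists_isNbr P 1 cur t ht hconet
        by_cases hyt : y = t
        · subst hyt
          obtain ⟨k, v, hp, h0, hk, hl⟩ := path_single ht
          have hadj : Theta4Adj P cur y := adj_of_nbr hI.curP ⟨hyP, hyc0, hymin⟩ (by norm_num)
          obtain ⟨k', v', hp', h0', hk', hlen'⟩ := path_cons hadj hp h0 hk
          refine ⟨k', v', hp', h0', hk', ?_⟩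
          rw [hlen', hl]
          have hc2 := dist2_le_dist1 cur y
          rw [d1_c1 hxlt hylt] at hc2
          have := hI.kpos; have := hI.Rpos
          linarith
        · have hmin_t := hymin t ht hconet
          have hyc := (cone1_iff cur y).mp hyc0
          have hsumy : y.1 + y.2 < t.1 + t.2 := by
            have e1 := d1_c1 hyc.1 hyc.2
            have e2 := d1_c1 hxlt hylt
            have hne2 := (hP y hyP t ht hyt).2.2.2
            have hle : y.1 + y.2 ≤ t.1 + t.2 := by rw [e1, e2] at hmin_t; linarith
            rcases hle.lt_or_eq with h | h
            · exact h
            · exact absurd (by linarith : y.2 + y.1 = t.2 + t.1) hne2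
          exact key y ⟨hyP, hyc0, hymin⟩ hyt hsumy
      · -- `cur ∈ C₂(t)`
        by_cases hpc : TProtected P t cur
        · -- protected: left dive via `n₀`
          have hconet : cone 0 cur t := (cone0_iff cur t).mpr ⟨hxlt, hygt⟩
          obtain ⟨q, hqP, hqc0, hqmin⟩ := exists_isNbr P 0 cur t ht hconet
          have hmin_t := hqmin t ht hconet
          have hqc := (cone0_iff cur q).mp hqc0
          obtain ⟨hqx, hqy⟩ := hqc
          have eD : dist1 cur t = (t.1 - cur.1) + (cur.2 - t.2) := d1_c0 hxlt hygt
          have ed : dist1 cur q = (q.1 - cur.1) + (cur.2 - q.2) := d1_c0 hqx hqy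
          have hDκ : dist1 cur t ≤ κ := hI.J5 hxlt hygt hpc
          have hadj : Theta4Adj P cur q := adj_of_nbr hI.curP ⟨hqP, hqc0, hqmin⟩ (by norm_num)
          by_cases hqt : q = t
          · subst hqt
            obtain ⟨k, v, hp, h0, hk, hl⟩ := path_single ht
            obtain ⟨k', v', hp', h0', hk', hlen'⟩ := path_cons hadj hp h0 hk
            refine ⟨k', v', hp', h0', hk', ?_⟩
            rw [hlen', hl]
            have hc2 := dist2_le_dist1 cur q
            have := hI.Rpos
            linarith
          · obtain ⟨gq1, gq2, gq3, gq4⟩ := hP q hqP t ht hqt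
            have hasum : t.2 - t.1 < q.2 - q.1 := by
              have hle : t.2 - t.1 ≤ q.2 - q.1 := by rw [eD, ed] at hmin_t; linarith
              rcases hle.lt_or_eq with h | h
              · exact h
              · exact absurd (by linarith : q.2 - q.1 = t.2 - t.1) gq3
            have hqxt : q.1 < t.1 := by
              rcases lt_or_gt_of_ne gq1 with h | h
              · exact h
              · exfalso
                have h17 := hI.J17
                exact hempty q hqP ⟨h, by linarith, by linarith, by linarith⟩
            have hκ'0 : (0:ℝ) ≤ dist1 cur t - dist1 cur q := by linarith
            have hInv' : WInv P s t q cur (dist1 cur t - dist1 cur q) R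
                (max 0 (t.2 - q.2)) FLOOR :=
              { curP := hqP
                lP := hI.curP
                lx := hxlt
                ly := hygt
                lprot := hpc
                lxs := hsx
                kpos := hκ'0
                Rpos := hI.Rpos
                Hpos := le_max_left 0 _
                J2 := by
                  intro w hwP h1 h2 h3 h4
                  have hwne : w ≠ cur := by
                    intro h; rw [h] at h1; exact lt_irrefl _ h1
                  obtain ⟨gw1, gw2, -, -⟩ := hP w hwP cur hI.curP hwne
                  rcases lt_or_gt_of_ne gw2 with hw2 | hw2
                  · have hminw := hqmin w hwP ((cone0_iff cur w).mpr ⟨h1, hw2⟩)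
                    have ew : dist1 cur w = (w.1 - cur.1) + (cur.2 - w.2) := d1_c0 h1 hw2
                    have ewt : dist1 w t = (t.1 - w.1) + (w.2 - t.2) := by
                      unfold dist1
                      rw [abs_of_neg (by linarith : w.1 - t.1 < 0),
                        abs_of_pos (by linarith : (0:ℝ) < w.2 - t.2)]
                      ring
                    rw [ewt, eD]
                    rw [ew] at hminw
                    linarith
                  · have := hpc w hwP ((cone1_iff cur w).mpr ⟨h1, hw2⟩)
                    linarith
                J3 := hI.J3
                J5 := by
                  intro h1 h2 _
                  have eqt : dist1 q t = (t.1 - q.1) + (q.2 - t.2) := by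
                    unfold dist1
                    rw [abs_of_neg (by linarith : q.1 - t.1 < 0),
                      abs_of_pos (by linarith : (0:ℝ) < q.2 - t.2)]
                    ring
                  rw [eqt, eD, ed]
                  linarith
                J7 := by
                  intro h1 _ _
                  exact absurd h1 (not_lt_of_gt hqxt)
                J6 := by have := hI.J6; linarith
                J13 := le_of_lt hqx
                J10 := by
                  apply max_le
                  · linarith
                  · linarith
                J11 := by have := le_max_right 0 (t.2 - q.2); linarith
                J12 := by have := hI.J6; linarith
                J14 := by rintro ⟨h1, -⟩; exact absurd h1 (not_lt_of_gt hqxt)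
                J16 := by linarith
                J17 := by have := hI.J17; linarith
                JF := hI.JF }
            have hmlt : distInf q t < distInf cur t := by
              have e : distInf q t = max |q.1 - t.1| |q.2 - t.2| := rfl
              rw [e]
              apply max_lt
              · rw [abs_lt]
                exact ⟨by linarith, by linarith⟩
              · rw [abs_lt]
                exact ⟨by linarith, by linarith⟩
            obtain ⟨k, v, hp, h0, hk, hlen⟩ := ih q cur (dist1 cur t - dist1 cur q) R
              (max 0 (t.2 - q.2)) FLOOR hInv' (by have := msr_lt hI.curP hmlt; omega)
            obtain ⟨k', v', hp', h0', hk', hlen'⟩ := path_cons hadj hp h0 hk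
            refine ⟨k', v', hp', h0', hk', ?_⟩
            rw [hlen']
            have hc2 := dist2_le_dist1 cur q
            have hdrop : cur.1 + cur.2 - (q.1 + q.2) ≤ dist1 cur q := by
              rw [ed]; linarith
            linarith
        · -- unprotected: `n₁`-step towards a violator
          rw [TProtected] at hpc; push_neg at hpc
          obtain ⟨v0, hv0P, hv0c, hv0s⟩ := hpc
          obtain ⟨y, hyP, hyc0, hymin⟩ := exists_isNbr P 1 cur v0 hv0P hv0c
          have hmin_v := hymin v0 hv0P hv0c
          have hyc := (cone1_iff cur y).mp hyc0
          have hv0c' := (cone1_iff cur v0).mp hv0c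
          have hyt : y ≠ t := by
            intro h
            rw [h] at hyc
            linarith [hyc.2]
          have hsumy : y.1 + y.2 < t.1 + t.2 := by
            have e1 := d1_c1 hyc.1 hyc.2
            have e2 := d1_c1 hv0c'.1 hv0c'.2
            have hne2 := (hP y hyP t ht hyt).2.2.2
            have hle : y.1 + y.2 ≤ t.1 + t.2 := by rw [e1, e2] at hmin_v; linarith
            rcases hle.lt_or_eq with h | h
            · exact h
            · exact absurd (by linarith : y.2 + y.1 = t.2 + t.1) hne2
          exact key y ⟨hyP, hyc0, hymin⟩ hyt hsumy
    · rcases lt_or_gt_of_ne hy_ne with hylt | hygt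
      · -- `cur ∈ C₀(t)`
        by_cases hpc : TProtected P t cur
        · -- protected: right dive via `n₂`
          have hconet : cone 2 cur t := (cone2_iff cur t).mpr ⟨hxgt, hylt⟩
          obtain ⟨q, hqP, hqc0, hqmin⟩ := exists_isNbr P 2 cur t ht hconet
          have hmin_t := hqmin t ht hconet
          have hqc := (cone2_iff cur q).mp hqc0
          obtain ⟨hqx, hqy⟩ := hqc
          have eD : dist1 cur t = (cur.1 - t.1) + (t.2 - cur.2) := d1_c2 hxgt hylt
          have ed : dist1 cur q = (cur.1 - q.1) + (q.2 - cur.2) := d1_c2 hqx hqy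
          have hDR : dist1 cur t ≤ R := hI.J7 hxgt hylt hpc
          have hadj : Theta4Adj P cur q := adj_of_nbr hI.curP ⟨hqP, hqc0, hqmin⟩ (by norm_num)
          by_cases hqt : q = t
          · subst hqt
            obtain ⟨k, v, hp, h0, hk, hl⟩ := path_single ht
            obtain ⟨k', v', hp', h0', hk', hlen'⟩ := path_cons hadj hp h0 hk
            refine ⟨k', v', hp', h0', hk', ?_⟩
            rw [hlen', hl]
            have hc2 := dist2_le_dist1 cur q
            have := hI.kpos
            linarith
          · obtain ⟨gq1, gq2, gq3, gq4⟩ := hP q hqP t ht hqt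
            have hasum : q.2 - q.1 < t.2 - t.1 := by
              have hle : q.2 - q.1 ≤ t.2 - t.1 := by rw [eD, ed] at hmin_t; linarith
              rcases hle.lt_or_eq with h | h
              · exact h
              · exact absurd h gq3
            have hqyt : q.2 < t.2 := by
              rcases lt_or_gt_of_ne gq2 with h | h
              · exact h
              · exfalso
                have h16 := hI.J16
                exact hempty q hqP ⟨by linarith, by linarith, h, by linarith⟩
            have hR'0 : (0:ℝ) ≤ dist1 cur t - dist1 cur q := by linarith
            have hJ6' : t.1 - (t.2 - cur.2) ≤ q.1 := by
              rw [eD, ed] at hmin_t; linarith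
            have hInv' : WInv P s t q ℓ κ (dist1 cur t - dist1 cur q) H cur.2 :=
              { curP := hqP
                lP := hI.lP
                lx := hI.lx
                ly := hI.ly
                lprot := hI.lprot
                lxs := hI.lxs
                kpos := hI.kpos
                Rpos := hR'0
                Hpos := hI.Hpos
                J2 := hI.J2
                J3 := by
                  intro w hwP h1 h2 h3 h4
                  have hwne : w ≠ cur := by
                    intro h; rw [h] at h3; exact lt_irrefl _ h3
                  obtain ⟨gw1, -, -, -⟩ := hP w hwP cur hI.curP hwne
                  rcases lt_or_gt_of_ne gw1 with hw1 | hw1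
                  · have hminw := hqmin w hwP ((cone2_iff cur w).mpr ⟨hw1, h3⟩)
                    have ew : dist1 cur w = (cur.1 - w.1) + (w.2 - cur.2) := d1_c2 hw1 h3
                    have ewt : dist1 w t = (w.1 - t.1) + (t.2 - w.2) := by
                      unfold dist1
                      rw [abs_of_pos (by linarith : (0:ℝ) < w.1 - t.1),
                        abs_of_neg (by linarith : w.2 - t.2 < 0)]
                      ring
                    rw [ewt, eD]
                    rw [ew] at hminw
                    linarith
                  · have := hpc w hwP ((cone1_iff cur w).mpr ⟨hw1, h3⟩)
                    linarith
                J5 := by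
                  intro _ h2 _
                  exact absurd h2 (not_lt_of_gt hqyt)
                J7 := by
                  intro h1 h2 _
                  have eqt : dist1 q t = (q.1 - t.1) + (t.2 - q.2) := by
                    unfold dist1
                    rw [abs_of_pos (by linarith : (0:ℝ) < q.1 - t.1),
                      abs_of_neg (by linarith : q.2 - t.2 < 0)]
                    ring
                  rw [eqt, eD, ed]
                  linarith
                J6 := hJ6'
                J13 := by have := hI.J11; have := hI.J10; linarith
                J10 := hI.J10
                J11 := by have := hI.J11; linarith
                J12 := hqy
                J14 := by rintro ⟨-, h2⟩; exact absurd h2 (not_lt_of_gt hqyt)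
                J16 := by have := hI.J16; linarith
                J17 := by linarith
                JF := hylt }
            have hmlt : distInf q t < distInf cur t := by
              have e : distInf q t = max |q.1 - t.1| |q.2 - t.2| := rfl
              rw [e]
              apply max_lt
              · rw [abs_lt]
                exact ⟨by linarith, by linarith⟩
              · rw [abs_lt]
                exact ⟨by linarith, by linarith⟩
            obtain ⟨k, v, hp, h0, hk, hlen⟩ := ih q ℓ κ (dist1 cur t - dist1 cur q)
              H cur.2 hInv' (by have := msr_lt hI.curP hmlt; omega)
            obtain ⟨k', v', hp', h0', hk', hlen'⟩ := path_cons hadj hp h0 hk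
            refine ⟨k', v', hp', h0', hk', ?_⟩
            rw [hlen']
            have hc2 := dist2_le_dist1 cur q
            have hdrop : cur.1 + cur.2 - (q.1 + q.2) ≤ dist1 cur q := by
              rw [ed]; linarith
            linarith
        · -- unprotected: `n₁`-step towards a violator
          rw [TProtected] at hpc; push_neg at hpc
          obtain ⟨v0, hv0P, hv0c, hv0s⟩ := hpc
          obtain ⟨y, hyP, hyc0, hymin⟩ := exists_isNbr P 1 cur v0 hv0P hv0c
          have hmin_v := hymin v0 hv0P hv0c
          have hyc := (cone1_iff cur y).mp hyc0
          have hv0c' := (cone1_iff cur v0).mp hv0c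
          have hyt : y ≠ t := by
            intro h
            rw [h] at hyc
            linarith [hyc.1]
          have hsumy : y.1 + y.2 < t.1 + t.2 := by
            have e1 := d1_c1 hyc.1 hyc.2
            have e2 := d1_c1 hv0c'.1 hv0c'.2
            have hne2 := (hP y hyP t ht hyt).2.2.2
            have hle : y.1 + y.2 ≤ t.1 + t.2 := by rw [e1, e2] at hmin_v; linarith
            rcases hle.lt_or_eq with h | h
            · exact h
            · exact absurd (by linarith : y.2 + y.1 = t.2 + t.1) hne2
          exact key y ⟨hyP, hyc0, hymin⟩ hyt hsumy
      · exact absurd ⟨hxgt, hygt⟩ hI.J14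

/-- If `t ∈ C₀(s)`, the top-right quadrant of `S_t(s)` is empty, and `s` is `t`-protected,
then there is an `s`-`t`-path in the θ₄-graph of length at most `18·‖s−t‖₁`. -/
theorem one_empty_quadrant (P : Finset (ℝ × ℝ)) (hP : GenPos P) (s t : ℝ × ℝ)
    (hs : s ∈ P) (ht : t ∈ P) (hcone : cone 0 s t)
    (hempty : ∀ q ∈ P,
      ¬ (t.1 < q.1 ∧ q.1 < t.1 + distInf s t ∧ t.2 < q.2 ∧ q.2 < t.2 + distInf s t))
    (hprot : TProtected P t s) :
    ∃ (k : ℕ) (v : ℕ → ℝ × ℝ), IsTheta4Path P k v ∧ v 0 = s ∧ v k = t ∧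
      pathLength k v ≤ 18 * dist1 s t := by
  obtain ⟨ha, hb⟩ := (cone0_iff s t).mp hcone
  have hWa : t.1 - s.1 ≤ distInf s t := by
    unfold distInf
    have h1 : |s.1 - t.1| = t.1 - s.1 := by
      rw [abs_of_neg (by linarith : s.1 - t.1 < 0)]; ring
    have h2 := le_max_left |s.1 - t.1| |s.2 - t.2|
    linarith
  have hWb : s.2 - t.2 ≤ distInf s t := by
    unfold distInf
    have h1 : |s.2 - t.2| = s.2 - t.2 := abs_of_pos (by linarith)
    have h2 := le_max_right |s.1 - t.1| |s.2 - t.2|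
    linarith
  have hInv0 : WInv P s t s s (2*(t.1 - s.1) + (s.2 - t.2)) (2*(t.1 - s.1)) 0
      (t.2 - (t.1 - s.1)) :=
    { curP := hs
      lP := hs
      lx := ha
      ly := hb
      lprot := hprot
      lxs := le_refl _
      kpos := by linarith
      Rpos := by linarith
      Hpos := le_refl 0
      J2 := by
        intro w hwP h1 h2 h3 h4
        have e : dist1 w t = (t.1 - w.1) + (w.2 - t.2) := by
          unfold dist1
          rw [abs_of_neg (by linarith : w.1 - t.1 < 0),
            abs_of_pos (by linarith : (0:ℝ) < w.2 - t.2)]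
          ring
        rw [e]; linarith
      J3 := by
        intro w hwP h1 h2 h3 h4
        have e : dist1 w t = (w.1 - t.1) + (t.2 - w.2) := by
          unfold dist1
          rw [abs_of_pos (by linarith : (0:ℝ) < w.1 - t.1),
            abs_of_neg (by linarith : w.2 - t.2 < 0)]
          ring
        rw [e]; linarith
      J5 := by
        intro _ _ _
        rw [d1_c0 ha hb]; linarith
      J7 := by
        intro h1 _ _
        exact absurd h1 (not_lt_of_gt ha)
      J6 := by linarith
      J13 := le_refl _
      J10 := by linarith
      J11 := by linarith
      J12 := by linarith
      J14 := by rintro ⟨h1, -⟩; exact absurd h1 (not_lt_of_gt ha)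
      J16 := by linarith
      J17 := le_refl _
      JF := by linarith }
  obtain ⟨k, v, hp, h0, hk, hlen⟩ := master P hP s t hs ht ha hb hWa hWb hempty hprot
    (Msr P t s) s s _ _ _ _ hInv0 (le_refl _)
  refine ⟨k, v, hp, h0, hk, ?_⟩
  have e : dist1 s t = (t.1 - s.1) + (s.2 - t.2) := d1_c0 ha hb
  rw [e]
  linarith
end

section
/- Let S be an axis-aligned square and let a and b be two points lying on two sides of S that share a corner (consecutive sides of the boundary of S). Then there exists an axis-aligned square S_ab such that S_ab ⊆ S, the segment ab is contained in S_ab, and at least one of a and b lies on a corner of S_ab. -/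
open scoped BigOperators

/-- Membership in the (closed) axis-aligned square with bottom-left corner `(x0, y0)`
and side length `L`. -/
def inSquare (x0 y0 L : ℝ) (q : ℝ × ℝ) : Prop :=
  x0 ≤ q.1 ∧ q.1 ≤ x0 + L ∧ y0 ≤ q.2 ∧ q.2 ≤ y0 + L

/-- `q` lies on the left side of the square. -/
def onLeft (x0 y0 L : ℝ) (q : ℝ × ℝ) : Prop := q.1 = x0 ∧ y0 ≤ q.2 ∧ q.2 ≤ y0 + L

/-- `q` lies on the right side of the square. -/
def onRight (x0 y0 L : ℝ) (q : ℝ × ℝ) : Prop := q.1 = x0 + L ∧ y0 ≤ q.2 ∧ q.2 ≤ y0 + L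

/-- `q` lies on the bottom side of the square. -/
def onBottom (x0 y0 L : ℝ) (q : ℝ × ℝ) : Prop := q.2 = y0 ∧ x0 ≤ q.1 ∧ q.1 ≤ x0 + L

/-- `q` lies on the top side of the square. -/
def onTop (x0 y0 L : ℝ) (q : ℝ × ℝ) : Prop := q.2 = y0 + L ∧ x0 ≤ q.1 ∧ q.1 ≤ x0 + L

/-- `a` and `b` lie on two sides of the square that share a corner. -/
def onConsecutiveSides (x0 y0 L : ℝ) (a b : ℝ × ℝ) : Prop :=
  (onBottom x0 y0 L a ∧ onLeft x0 y0 L b) ∨ (onBottom x0 y0 L a ∧ onRight x0 y0 L b) ∨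
  (onTop x0 y0 L a ∧ onLeft x0 y0 L b) ∨ (onTop x0 y0 L a ∧ onRight x0 y0 L b) ∨
  (onLeft x0 y0 L a ∧ onBottom x0 y0 L b) ∨ (onRight x0 y0 L a ∧ onBottom x0 y0 L b) ∨
  (onLeft x0 y0 L a ∧ onTop x0 y0 L b) ∨ (onRight x0 y0 L a ∧ onTop x0 y0 L b)

/-- `q` is a corner of the square with bottom-left corner `(x0, y0)` and side `L`. -/
def isCorner (x0 y0 L : ℝ) (q : ℝ × ℝ) : Prop :=
  q = (x0, y0) ∨ q = (x0 + L, y0) ∨ q = (x0, y0 + L) ∨ q = (x0 + L, y0 + L)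


lemma segment_in_square {x1 y1 L' : ℝ} {a b : ℝ × ℝ}
    (ha : inSquare x1 y1 L' a) (hb : inSquare x1 y1 L' b) :
    ∀ z ∈ segment ℝ a b, inSquare x1 y1 L' z := by
  rintro z ⟨u, v, hu, hv, huv, rfl⟩
  obtain ⟨ha1, ha2, ha3, ha4⟩ := ha
  obtain ⟨hb1, hb2, hb3, hb4⟩ := hb
  have h1 : (u • a + v • b).1 = u * a.1 + v * b.1 := rfl
  have h2 : (u • a + v • b).2 = u * a.2 + v * b.2 := rfl
  have hx : u * x1 + v * x1 = x1 := by rw [← add_mul, huv, one_mul]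
  have hx' : u * (x1 + L') + v * (x1 + L') = x1 + L' := by rw [← add_mul, huv, one_mul]
  have hy : u * y1 + v * y1 = y1 := by rw [← add_mul, huv, one_mul]
  have hy' : u * (y1 + L') + v * (y1 + L') = y1 + L' := by rw [← add_mul, huv, one_mul]
  refine ⟨?_, ?_, ?_, ?_⟩
  · rw [h1]; have := mul_le_mul_of_nonneg_left ha1 hu
    have := mul_le_mul_of_nonneg_left hb1 hv; linarith
  · rw [h1]; have := mul_le_mul_of_nonneg_left ha2 hu
    have := mul_le_mul_of_nonneg_left hb2 hv; linarith
  · rw [h2]; have := mul_le_mul_of_nonneg_left ha3 hu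
    have := mul_le_mul_of_nonneg_left hb3 hv; linarith
  · rw [h2]; have := mul_le_mul_of_nonneg_left ha4 hu
    have := mul_le_mul_of_nonneg_left hb4 hv; linarith

lemma caseBL (x0 y0 L : ℝ) (_hL : 0 ≤ L) (a b : ℝ × ℝ)
    (ha : onBottom x0 y0 L a) (hb : onLeft x0 y0 L b) :
    ∃ x1 y1 L' : ℝ, 0 ≤ L' ∧
      (∀ q : ℝ × ℝ, inSquare x1 y1 L' q → inSquare x0 y0 L q) ∧
      (∀ z ∈ segment ℝ a b, inSquare x1 y1 L' z) ∧
      (isCorner x1 y1 L' a ∨ isCorner x1 y1 L' b) := by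
  obtain ⟨ha2, ha1, ha1'⟩ := ha
  obtain ⟨hb1, hb2, hb2'⟩ := hb
  set L' := max (a.1 - x0) (b.2 - y0) with hL'def
  have hm1 := le_max_left (a.1 - x0) (b.2 - y0)
  have hm2 := le_max_right (a.1 - x0) (b.2 - y0)
  have hL'0 : 0 ≤ L' := by simp only [← hL'def] at hm1 ⊢; linarith
  have hL'L : L' ≤ L := max_le (by linarith) (by linarith)
  have ha' : inSquare x0 y0 L' a := ⟨ha1, by linarith, by linarith, by linarith⟩
  have hb' : inSquare x0 y0 L' b := ⟨le_of_eq hb1.symm, by linarith, hb2, by linarith⟩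
  refine ⟨x0, y0, L', hL'0, ?_, segment_in_square ha' hb', ?_⟩
  · rintro q ⟨h1, h2, h3, h4⟩; exact ⟨h1, by linarith, h3, by linarith⟩
  · rcases le_total (b.2 - y0) (a.1 - x0) with h | h
    · left; right; left
      have hm : L' = a.1 - x0 := max_eq_left h
      rw [Prod.ext_iff]; exact ⟨by rw [hm]; ring, ha2⟩
    · right; right; right; left
      have hm : L' = b.2 - y0 := max_eq_right h
      rw [Prod.ext_iff]; exact ⟨hb1, by rw [hm]; ring⟩

lemma caseBR (x0 y0 L : ℝ) (_hL : 0 ≤ L) (a b : ℝ × ℝ)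
    (ha : onBottom x0 y0 L a) (hb : onRight x0 y0 L b) :
    ∃ x1 y1 L' : ℝ, 0 ≤ L' ∧
      (∀ q : ℝ × ℝ, inSquare x1 y1 L' q → inSquare x0 y0 L q) ∧
      (∀ z ∈ segment ℝ a b, inSquare x1 y1 L' z) ∧
      (isCorner x1 y1 L' a ∨ isCorner x1 y1 L' b) := by
  obtain ⟨ha2, ha1, ha1'⟩ := ha
  obtain ⟨hb1, hb2, hb2'⟩ := hb
  set L' := max (x0 + L - a.1) (b.2 - y0) with hL'def
  have hm1 := le_max_left (x0 + L - a.1) (b.2 - y0)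
  have hm2 := le_max_right (x0 + L - a.1) (b.2 - y0)
  have hL'0 : 0 ≤ L' := by simp only [← hL'def] at hm1 ⊢; linarith
  have hL'L : L' ≤ L := max_le (by linarith) (by linarith)
  have ha' : inSquare (x0 + L - L') y0 L' a := ⟨by linarith, by linarith, by linarith, by linarith⟩
  have hb' : inSquare (x0 + L - L') y0 L' b := ⟨by rw [hb1]; linarith, by rw [hb1]; linarith, hb2, by linarith⟩
  refine ⟨x0 + L - L', y0, L', hL'0, ?_, segment_in_square ha' hb', ?_⟩
  · rintro q ⟨h1, h2, h3, h4⟩; exact ⟨by linarith, by linarith, h3, by linarith⟩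
  · rcases le_total (b.2 - y0) (x0 + L - a.1) with h | h
    · left; left
      have hm : L' = x0 + L - a.1 := max_eq_left h
      rw [Prod.ext_iff]; exact ⟨by rw [hm]; ring, ha2⟩
    · right; right; right; right
      have hm : L' = b.2 - y0 := max_eq_right h
      rw [Prod.ext_iff]; constructor
      · rw [hb1]; ring
      · rw [hm]; ring

lemma caseTL (x0 y0 L : ℝ) (_hL : 0 ≤ L) (a b : ℝ × ℝ)
    (ha : onTop x0 y0 L a) (hb : onLeft x0 y0 L b) :
    ∃ x1 y1 L' : ℝ, 0 ≤ L' ∧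
      (∀ q : ℝ × ℝ, inSquare x1 y1 L' q → inSquare x0 y0 L q) ∧
      (∀ z ∈ segment ℝ a b, inSquare x1 y1 L' z) ∧
      (isCorner x1 y1 L' a ∨ isCorner x1 y1 L' b) := by
  obtain ⟨ha2, ha1, ha1'⟩ := ha
  obtain ⟨hb1, hb2, hb2'⟩ := hb
  set L' := max (a.1 - x0) (y0 + L - b.2) with hL'def
  have hm1 := le_max_left (a.1 - x0) (y0 + L - b.2)
  have hm2 := le_max_right (a.1 - x0) (y0 + L - b.2)
  have hL'0 : 0 ≤ L' := by simp only [← hL'def] at hm1 ⊢; linarith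
  have hL'L : L' ≤ L := max_le (by linarith) (by linarith)
  have ha' : inSquare x0 (y0 + L - L') L' a := ⟨ha1, by linarith, by linarith, by linarith⟩
  have hb' : inSquare x0 (y0 + L - L') L' b := ⟨le_of_eq hb1.symm, by rw [hb1]; linarith, by linarith, by linarith⟩
  refine ⟨x0, y0 + L - L', L', hL'0, ?_, segment_in_square ha' hb', ?_⟩
  · rintro q ⟨h1, h2, h3, h4⟩; exact ⟨h1, by linarith, by linarith, by linarith⟩
  · rcases le_total (y0 + L - b.2) (a.1 - x0) with h | h
    · left; right; right; right
      have hm : L' = a.1 - x0 := max_eq_left h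
      rw [Prod.ext_iff]; constructor
      · rw [hm]; ring
      · rw [ha2]; ring
    · right; left
      have hm : L' = y0 + L - b.2 := max_eq_right h
      rw [Prod.ext_iff]; exact ⟨hb1, by rw [hm]; ring⟩

lemma caseTR (x0 y0 L : ℝ) (_hL : 0 ≤ L) (a b : ℝ × ℝ)
    (ha : onTop x0 y0 L a) (hb : onRight x0 y0 L b) :
    ∃ x1 y1 L' : ℝ, 0 ≤ L' ∧
      (∀ q : ℝ × ℝ, inSquare x1 y1 L' q → inSquare x0 y0 L q) ∧
      (∀ z ∈ segment ℝ a b, inSquare x1 y1 L' z) ∧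
      (isCorner x1 y1 L' a ∨ isCorner x1 y1 L' b) := by
  obtain ⟨ha2, ha1, ha1'⟩ := ha
  obtain ⟨hb1, hb2, hb2'⟩ := hb
  set L' := max (x0 + L - a.1) (y0 + L - b.2) with hL'def
  have hm1 := le_max_left (x0 + L - a.1) (y0 + L - b.2)
  have hm2 := le_max_right (x0 + L - a.1) (y0 + L - b.2)
  have hL'0 : 0 ≤ L' := by simp only [← hL'def] at hm1 ⊢; linarith
  have hL'L : L' ≤ L := max_le (by linarith) (by linarith)
  have ha' : inSquare (x0 + L - L') (y0 + L - L') L' a :=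
    ⟨by linarith, by linarith, by linarith, by linarith⟩
  have hb' : inSquare (x0 + L - L') (y0 + L - L') L' b :=
    ⟨by rw [hb1]; linarith, by rw [hb1]; linarith, by linarith, by linarith⟩
  refine ⟨x0 + L - L', y0 + L - L', L', hL'0, ?_, segment_in_square ha' hb', ?_⟩
  · rintro q ⟨h1, h2, h3, h4⟩; exact ⟨by linarith, by linarith, by linarith, by linarith⟩
  · rcases le_total (y0 + L - b.2) (x0 + L - a.1) with h | h
    · left; right; right; left
      have hm : L' = x0 + L - a.1 := max_eq_left h
      rw [Prod.ext_iff]; constructor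
      · rw [hm]; ring
      · rw [ha2]; ring
    · right; right; left
      have hm : L' = y0 + L - b.2 := max_eq_right h
      rw [Prod.ext_iff]; constructor
      · rw [hb1]; ring
      · rw [hm]; ring

lemma swapSides (x0 y0 L : ℝ) (a b : ℝ × ℝ)
    (h : ∃ x1 y1 L' : ℝ, 0 ≤ L' ∧
      (∀ q : ℝ × ℝ, inSquare x1 y1 L' q → inSquare x0 y0 L q) ∧
      (∀ z ∈ segment ℝ b a, inSquare x1 y1 L' z) ∧
      (isCorner x1 y1 L' b ∨ isCorner x1 y1 L' a)) :
    ∃ x1 y1 L' : ℝ, 0 ≤ L' ∧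
      (∀ q : ℝ × ℝ, inSquare x1 y1 L' q → inSquare x0 y0 L q) ∧
      (∀ z ∈ segment ℝ a b, inSquare x1 y1 L' z) ∧
      (isCorner x1 y1 L' a ∨ isCorner x1 y1 L' b) := by
  obtain ⟨x1, y1, L', h0, h1, h2, h3⟩ := h
  exact ⟨x1, y1, L', h0, h1, fun z hz => h2 z (by rwa [segment_symm]), h3.symm⟩

/-- If `a` and `b` lie on consecutive sides of an axis-aligned square `S`, then there is an
axis-aligned square `S_ab ⊆ S` containing the segment `ab` with `a` or `b` on a corner. -/
theorem square_consecutive_sides (x0 y0 L : ℝ) (hL : 0 ≤ L) (a b : ℝ × ℝ)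
    (hab : onConsecutiveSides x0 y0 L a b) :
    ∃ x1 y1 L' : ℝ, 0 ≤ L' ∧
      (∀ q : ℝ × ℝ, inSquare x1 y1 L' q → inSquare x0 y0 L q) ∧
      (∀ z ∈ segment ℝ a b, inSquare x1 y1 L' z) ∧
      (isCorner x1 y1 L' a ∨ isCorner x1 y1 L' b) := by
  rcases hab with h | h | h | h | h | h | h | h
  · exact caseBL x0 y0 L hL a b h.1 h.2
  · exact caseBR x0 y0 L hL a b h.1 h.2
  · exact caseTL x0 y0 L hL a b h.1 h.2
  · exact caseTR x0 y0 L hL a b h.1 h.2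
  · exact swapSides x0 y0 L a b (caseBL x0 y0 L hL b a h.2 h.1)
  · exact swapSides x0 y0 L a b (caseBR x0 y0 L hL b a h.2 h.1)
  · exact swapSides x0 y0 L a b (caseTL x0 y0 L hL b a h.2 h.1)
  · exact swapSides x0 y0 L a b (caseTR x0 y0 L hL b a h.2 h.1)
end

section
/- Let P be a finite set of points in the plane in general position and let s, t ∈ P with sₓ < tₓ. Let w be the final point of mpath(s,t). If w ≠ t, then: if w ∈ C₁(t) then w lies strictly above the line ℓ⁺_t, and if w ∈ C₀(t) then w lies strictly below the line ℓ⁻_t. -/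
open scoped BigOperators

/-- `IsMpath P s t k v` : `v 0, …, v k` is the greedy path `mpath(s,t)` : it starts at `s`,
at each step it moves to `n₀(z)` if the current point `z` is `t`-protected and to `n₁(z)`
otherwise, no intermediate point satisfies the stopping condition, and the final point is
either `t` or a `t`-protected point strictly to the right of `t`. -/
def IsMpath (P : Finset (ℝ × ℝ)) (s t : ℝ × ℝ) (k : ℕ) (v : ℕ → ℝ × ℝ) : Prop :=
  v 0 = s ∧
  (∀ j < k, (TProtected P t (v j) → IsNbr P 0 (v j) (v (j + 1))) ∧
            (¬ TProtected P t (v j) → IsNbr P 1 (v j) (v (j + 1)))) ∧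
  (∀ j < k, ¬ (v j = t ∨ (TProtected P t (v j) ∧ t.1 < (v j).1))) ∧
  (v k = t ∨ (TProtected P t (v k) ∧ t.1 < (v k).1))


lemma dist1_c0 (p q : ℝ × ℝ) (h1 : p.1 < q.1) (h2 : q.2 < p.2) :
    dist1 p q = (q.1 - p.1) + (p.2 - q.2) := by
  unfold dist1
  rw [abs_of_neg (by linarith : p.1 - q.1 < 0), abs_of_pos (by linarith : (0:ℝ) < p.2 - q.2)]
  ring

lemma dist1_c1 (p q : ℝ × ℝ) (h1 : p.1 < q.1) (h2 : p.2 < q.2) :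
    dist1 p q = (q.1 + q.2) - (p.1 + p.2) := by
  unfold dist1
  rw [abs_of_neg (by linarith : p.1 - q.1 < 0), abs_of_neg (by linarith : p.2 - q.2 < 0)]
  ring

/-- If the final point `w` of `mpath(s,t)` is not `t`, then `w` lies strictly above `ℓ⁺_t`
if `w ∈ C₁(t)`, and strictly below `ℓ⁻_t` if `w ∈ C₀(t)`. -/
theorem mpath_endpoint (P : Finset (ℝ × ℝ)) (hP : GenPos P) (s t : ℝ × ℝ)
    (hs : s ∈ P) (ht : t ∈ P) (hx : s.1 < t.1)
    (k : ℕ) (v : ℕ → ℝ × ℝ) (hm : IsMpath P s t k v) (hne : v k ≠ t) :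
    (cone 1 t (v k) → t.2 - t.1 < (v k).2 - (v k).1) ∧
    (cone 0 t (v k) → (v k).1 + (v k).2 < t.1 + t.2) := by

  obtain ⟨h0, hstep, hnostop, hstop⟩ := hm
  have hk : k ≠ 0 := by
    rintro rfl
    rcases hstop with h | h
    · exact hne h
    · rw [h0] at h; linarith [h.2]
  obtain ⟨m, rfl⟩ : ∃ m, k = m + 1 := ⟨k - 1, (Nat.succ_pred_eq_of_ne_zero hk).symm⟩
  have hvmem : ∀ j, j ≤ m + 1 → v j ∈ P := by
    intro j hj
    induction j with
    | zero => rw [h0]; exact hs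
    | succ n ih =>
      have hn : n < m + 1 := hj
      have hst := hstep n hn
      by_cases hp : TProtected P t (v n)
      · exact (hst.1 hp).1
      · exact (hst.2 hp).1
  set z := v m with hzdef
  set w := v (m + 1) with hwdef
  have hm1 : m < m + 1 := Nat.lt_succ_self m
  have hns := hnostop m hm1
  push_neg at hns
  obtain ⟨hzt, hzp⟩ := hns
  have hstep' := hstep m hm1
  have hzP : z ∈ P := hvmem m (Nat.le_succ m)
  have hgpz := hP z hzP t ht hzt
  by_cases hzprot : TProtected P t z
  · -- z protected: w = n₀(z)
    obtain ⟨hwP, hwc0, hmin⟩ := hstep'.1 hzprot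
    have hwc : z.1 < w.1 ∧ w.2 < z.2 := by simpa [cone] using hwc0
    have hgpw := hP w hwP t ht hne
    have hzx : z.1 < t.1 := lt_of_le_of_ne (hzp hzprot) hgpz.1
    constructor
    · intro hc1
      have hc : t.1 < w.1 ∧ t.2 < w.2 := by simpa [cone] using hc1
      have htz2 : t.2 < z.2 := lt_of_lt_of_le hc.2 hwc.2.le
      have hct : cone 0 z t := by simp only [cone, if_pos rfl]; exact ⟨hzx, htz2⟩
      have hd := hmin t ht hct
      rw [dist1_c0 z w hwc.1 hwc.2, dist1_c0 z t hzx htz2] at hd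
      have hstrict : w.2 - w.1 ≠ t.2 - t.1 := fun h => hgpw.2.2.1 h
      cases lt_or_gt_of_ne hstrict with
      | inl h => linarith
      | inr h => linarith
    · intro hc0
      have hc : t.1 < w.1 ∧ w.2 < t.2 := by simpa [cone] using hc0
      have htz2 : t.2 < z.2 := by
        by_contra hle
        have hz2t : z.2 < t.2 := lt_of_le_of_ne (not_lt.1 hle) hgpz.2.1
        have : cone 1 z t := by simp [cone]; exact ⟨hzx, hz2t⟩
        have := hzprot t ht this
        linarith
      have hct : cone 0 z t := by simp only [cone, if_pos rfl]; exact ⟨hzx, htz2⟩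
      have hd := hmin t ht hct
      rw [dist1_c0 z w hwc.1 hwc.2, dist1_c0 z t hzx htz2] at hd
      linarith [hc.1, hc.2]
  · -- z not protected: w = n₁(z)
    obtain ⟨hwP, hwc1, hmin⟩ := hstep'.2 hzprot
    have hwc : z.1 < w.1 ∧ z.2 < w.2 := by simpa [cone] using hwc1
    have hgpw := hP w hwP t ht hne
    rw [TProtected] at hzprot
    push_neg at hzprot
    obtain ⟨q, hqP, hqc, hq⟩ := hzprot
    have hqc' : z.1 < q.1 ∧ z.2 < q.2 := by simpa [cone] using hqc
    have hd := hmin q hqP hqc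
    rw [dist1_c1 z w hwc.1 hwc.2, dist1_c1 z q hqc'.1 hqc'.2] at hd
    have hsum : w.1 + w.2 < t.1 + t.2 := by
      have hne' : w.2 + w.1 ≠ t.2 + t.1 := hgpw.2.2.2
      cases lt_or_gt_of_ne hne' with
      | inl h => linarith
      | inr h => linarith
    constructor
    · intro hc1
      have hc : t.1 < w.1 ∧ t.2 < w.2 := by simpa [cone] using hc1
      linarith
    · intro _
      exact hsum
end

section
/- Let S be an axis-aligned square, let a and b be points lying on two opposite sides of S, and let c be a point on the boundary of S. Then ‖a−c‖₂ + ‖c−b‖₂ ≤ (1+√2)·‖a−b‖₂. -/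
open scoped BigOperators

/-- `a` and `b` lie on two opposite sides of the square. -/
def onOppositeSides (x0 y0 L : ℝ) (a b : ℝ × ℝ) : Prop :=
  (onLeft x0 y0 L a ∧ onRight x0 y0 L b) ∨ (onRight x0 y0 L a ∧ onLeft x0 y0 L b) ∨
  (onBottom x0 y0 L a ∧ onTop x0 y0 L b) ∨ (onTop x0 y0 L a ∧ onBottom x0 y0 L b)

section SquareDetourAux

private lemma sqrt2_sq' : Real.sqrt 2 ^ 2 = 2 := Real.sq_sqrt (by norm_num)

private lemma one_le_sqrt2' : (1:ℝ) ≤ Real.sqrt 2 := by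
  nlinarith [sqrt2_sq', Real.sqrt_nonneg 2]

private lemma sqrt2_le_two' : Real.sqrt 2 ≤ 2 := by
  nlinarith [sqrt2_sq', Real.sqrt_nonneg 2]

private lemma tangent' (x y : ℝ) (hx : 0 ≤ x) (hy : 0 ≤ y) (hyx : y ≤ x) :
    Real.sqrt (x^2 + y^2) ≤ x + (Real.sqrt 2 - 1) * y := by
  have hs := sqrt2_sq'
  have h1 := one_le_sqrt2'
  have hb : 0 ≤ x + (Real.sqrt 2 - 1) * y := by nlinarith
  calc Real.sqrt (x^2+y^2) ≤ Real.sqrt ((x + (Real.sqrt 2 - 1) * y)^2) := by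
        apply Real.sqrt_le_sqrt
        nlinarith [mul_nonneg (mul_nonneg (by linarith : (0:ℝ) ≤ Real.sqrt 2 - 1) hy) (by linarith : (0:ℝ) ≤ x - y)]
    _ = x + (Real.sqrt 2 - 1) * y := Real.sqrt_sq hb

private lemma key' (L t p q : ℝ) (ht : 0 ≤ t) (ht' : t ≤ L) (hp : 0 ≤ p) (hp' : p ≤ L)
    (hq : 0 ≤ q) (hq' : q ≤ L) :
    Real.sqrt (t^2 + p^2) + Real.sqrt ((L-t)^2 + q^2) ≤ (1 + Real.sqrt 2) * L := by
  have hs := sqrt2_sq'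
  have h1 := one_le_sqrt2'
  have h2 := sqrt2_le_two'
  rcases le_total p t with h | h <;> rcases le_total q (L - t) with h' | h'
  · have b1 := tangent' t p ht hp h
    have b2 := tangent' (L-t) q (by linarith) hq h'
    nlinarith [mul_nonneg (by linarith : (0:ℝ) ≤ Real.sqrt 2 - 1) (by linarith : (0:ℝ) ≤ L - p - q)]
  · have b1 := tangent' t p ht hp h
    have b2 : Real.sqrt ((L-t)^2 + q^2) ≤ q + (Real.sqrt 2 - 1) * (L-t) := by
      rw [show (L-t)^2 + q^2 = q^2 + (L-t)^2 by ring]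
      exact tangent' q (L-t) hq (by linarith) h'
    nlinarith [mul_nonneg (by linarith : (0:ℝ) ≤ Real.sqrt 2 - 1) (by linarith : (0:ℝ) ≤ t - p)]
  · have b1 : Real.sqrt (t^2 + p^2) ≤ p + (Real.sqrt 2 - 1) * t := by
      rw [show t^2 + p^2 = p^2 + t^2 by ring]
      exact tangent' p t hp ht h
    have b2 := tangent' (L-t) q (by linarith) hq h'
    nlinarith [mul_nonneg (by linarith : (0:ℝ) ≤ Real.sqrt 2 - 1) (by linarith : (0:ℝ) ≤ L - t - q),
      mul_nonneg (by linarith : (0:ℝ) ≤ 2 - Real.sqrt 2) ht]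
  · have b1 : Real.sqrt (t^2 + p^2) ≤ p + (Real.sqrt 2 - 1) * t := by
      rw [show t^2 + p^2 = p^2 + t^2 by ring]
      exact tangent' p t hp ht h
    have b2 : Real.sqrt ((L-t)^2 + q^2) ≤ q + (Real.sqrt 2 - 1) * (L-t) := by
      rw [show (L-t)^2 + q^2 = q^2 + (L-t)^2 by ring]
      exact tangent' q (L-t) hq (by linarith) h'
    nlinarith

private lemma diag' (L u v : ℝ) (hL : 0 ≤ L) (hu : u^2 ≤ L^2) (hv : v^2 ≤ L^2) :
    Real.sqrt (u^2 + v^2) ≤ Real.sqrt 2 * L := by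
  calc Real.sqrt (u^2+v^2) ≤ Real.sqrt (2 * L^2) := Real.sqrt_le_sqrt (by linarith)
    _ = Real.sqrt 2 * L := by
        rw [Real.sqrt_mul (by norm_num), Real.sqrt_sq hL]

private lemma dist2_comm' (p q : ℝ × ℝ) : dist2 p q = dist2 q p := by
  unfold dist2
  rw [show (p.1-q.1)^2 + (p.2-q.2)^2 = (q.1-p.1)^2 + (q.2-p.2)^2 by ring]

private lemma dist2_swap' (p q : ℝ × ℝ) : dist2 (p.2, p.1) (q.2, q.1) = dist2 p q := by
  unfold dist2
  simp only []
  rw [add_comm]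

private lemma core' (x0 y0 L : ℝ) (hL : 0 ≤ L) (a b c : ℝ × ℝ)
    (ha : onLeft x0 y0 L a) (hb : onRight x0 y0 L b)
    (hc : onLeft x0 y0 L c ∨ onRight x0 y0 L c ∨ onBottom x0 y0 L c ∨ onTop x0 y0 L c) :
    dist2 a c + dist2 c b ≤ (1 + Real.sqrt 2) * L := by
  obtain ⟨ha1, ha2, ha3⟩ := ha
  obtain ⟨hb1, hb2, hb3⟩ := hb
  have hs1 := one_le_sqrt2'
  rcases hc with ⟨h1, h2, h3⟩ | ⟨h1, h2, h3⟩ | ⟨h1, h2, h3⟩ | ⟨h1, h2, h3⟩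
  · have e1 : dist2 a c = |a.2 - c.2| := by
      unfold dist2
      rw [show (a.1-c.1)^2 + (a.2-c.2)^2 = (a.2-c.2)^2 by rw [ha1, h1]; ring,
        Real.sqrt_sq_eq_abs]
    have e2 : dist2 c b ≤ Real.sqrt 2 * L :=
      diag' L (c.1 - b.1) (c.2 - b.2) hL (by nlinarith) (by nlinarith)
    have e3 : |a.2 - c.2| ≤ L := abs_le.2 ⟨by linarith, by linarith⟩
    rw [e1]; nlinarith
  · have e1 : dist2 c b = |c.2 - b.2| := by
      unfold dist2
      rw [show (c.1-b.1)^2 + (c.2-b.2)^2 = (c.2-b.2)^2 by rw [hb1, h1]; ring,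
        Real.sqrt_sq_eq_abs]
    have e2 : dist2 a c ≤ Real.sqrt 2 * L :=
      diag' L (a.1 - c.1) (a.2 - c.2) hL (by nlinarith) (by nlinarith)
    have e3 : |c.2 - b.2| ≤ L := abs_le.2 ⟨by linarith, by linarith⟩
    rw [e1]; nlinarith
  · have e1 : dist2 a c = Real.sqrt ((c.1 - x0)^2 + (a.2 - y0)^2) := by
      unfold dist2
      rw [show (a.1-c.1)^2 + (a.2-c.2)^2 = (c.1-x0)^2 + (a.2-y0)^2 by rw [ha1, h1]; ring]
    have e2 : dist2 c b = Real.sqrt ((L - (c.1 - x0))^2 + (b.2 - y0)^2) := by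
      unfold dist2
      rw [show (c.1-b.1)^2 + (c.2-b.2)^2 = (L-(c.1-x0))^2 + (b.2-y0)^2 by rw [hb1, h1]; ring]
    rw [e1, e2]
    exact key' L (c.1 - x0) (a.2 - y0) (b.2 - y0) (by linarith) (by linarith)
      (by linarith) (by linarith) (by linarith) (by linarith)
  · have e1 : dist2 a c = Real.sqrt ((c.1 - x0)^2 + (y0 + L - a.2)^2) := by
      unfold dist2
      rw [show (a.1-c.1)^2 + (a.2-c.2)^2 = (c.1-x0)^2 + (y0+L-a.2)^2 by rw [ha1, h1]; ring]
    have e2 : dist2 c b = Real.sqrt ((L - (c.1 - x0))^2 + (y0 + L - b.2)^2) := by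
      unfold dist2
      rw [show (c.1-b.1)^2 + (c.2-b.2)^2 = (L-(c.1-x0))^2 + (y0+L-b.2)^2 by rw [hb1, h1]; ring]
    rw [e1, e2]
    exact key' L (c.1 - x0) (y0 + L - a.2) (y0 + L - b.2) (by linarith) (by linarith)
      (by linarith) (by linarith) (by linarith) (by linarith)

private lemma dist2_ge_of_fst (L : ℝ) (hL : 0 ≤ L) (a b : ℝ × ℝ)
    (h : L^2 ≤ (a.1 - b.1)^2) : L ≤ dist2 a b := by
  unfold dist2
  calc L = Real.sqrt (L^2) := (Real.sqrt_sq hL).symm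
    _ ≤ _ := Real.sqrt_le_sqrt (by nlinarith [sq_nonneg (a.2 - b.2)])

private lemma hc_swap' (x0 y0 L : ℝ) (c : ℝ × ℝ)
    (hc : onLeft x0 y0 L c ∨ onRight x0 y0 L c ∨ onBottom x0 y0 L c ∨ onTop x0 y0 L c) :
    onLeft y0 x0 L (c.2, c.1) ∨ onRight y0 x0 L (c.2, c.1) ∨
      onBottom y0 x0 L (c.2, c.1) ∨ onTop y0 x0 L (c.2, c.1) := by
  simp only [onLeft, onRight, onBottom, onTop] at *
  tauto

end SquareDetourAux

/-- If `a` and `b` lie on opposite sides of an axis-aligned square and `c` lies on its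
boundary, then `‖a−c‖₂ + ‖c−b‖₂ ≤ (1+√2)·‖a−b‖₂`. -/

theorem square_opposite_sides_detour (x0 y0 L : ℝ) (hL : 0 ≤ L) (a b c : ℝ × ℝ)
    (hab : onOppositeSides x0 y0 L a b)
    (hc : onLeft x0 y0 L c ∨ onRight x0 y0 L c ∨ onBottom x0 y0 L c ∨ onTop x0 y0 L c) :
    dist2 a c + dist2 c b ≤ (1 + Real.sqrt 2) * dist2 a b := by
  have hs1 := one_le_sqrt2'
  rcases hab with ⟨ha, hb⟩ | ⟨ha, hb⟩ | ⟨ha, hb⟩ | ⟨ha, hb⟩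
  · have h := core' x0 y0 L hL a b c ha hb hc
    have h2 : L ≤ dist2 a b :=
      dist2_ge_of_fst L hL a b (le_of_eq (by rw [ha.1, hb.1]; ring))
    have : (1 + Real.sqrt 2) * L ≤ (1 + Real.sqrt 2) * dist2 a b := by nlinarith
    linarith
  · have h := core' x0 y0 L hL b a c hb ha hc
    rw [show dist2 a c + dist2 c b = dist2 b c + dist2 c a by
      rw [dist2_comm' a c, dist2_comm' c b]; ring]
    have h2 : L ≤ dist2 a b :=
      dist2_ge_of_fst L hL a b (le_of_eq (by rw [ha.1, hb.1]; ring))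
    have : (1 + Real.sqrt 2) * L ≤ (1 + Real.sqrt 2) * dist2 a b := by nlinarith
    linarith
  · have ha' : onLeft y0 x0 L (a.2, a.1) := by
      simp only [onLeft, onBottom] at *; tauto
    have hb' : onRight y0 x0 L (b.2, b.1) := by
      simp only [onRight, onTop] at *; tauto
    have h := core' y0 x0 L hL (a.2, a.1) (b.2, b.1) (c.2, c.1) ha' hb' (hc_swap' x0 y0 L c hc)
    rw [dist2_swap' a c, dist2_swap' c b] at h
    have h2 : L ≤ dist2 a b := by
      rw [← dist2_swap' a b]
      exact dist2_ge_of_fst L hL (a.2, a.1) (b.2, b.1)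
        (le_of_eq (by simp only []; rw [ha.1, hb.1]; ring))
    have : (1 + Real.sqrt 2) * L ≤ (1 + Real.sqrt 2) * dist2 a b := by nlinarith
    linarith
  · have ha' : onRight y0 x0 L (a.2, a.1) := by
      simp only [onRight, onTop] at *; tauto
    have hb' : onLeft y0 x0 L (b.2, b.1) := by
      simp only [onLeft, onBottom] at *; tauto
    have h := core' y0 x0 L hL (b.2, b.1) (a.2, a.1) (c.2, c.1) hb' ha' (hc_swap' x0 y0 L c hc)
    rw [dist2_swap' b c, dist2_swap' c a] at h
    rw [show dist2 a c + dist2 c b = dist2 b c + dist2 c a by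
      rw [dist2_comm' a c, dist2_comm' c b]; ring]
    have h2 : L ≤ dist2 a b := by
      rw [← dist2_swap' a b]
      exact dist2_ge_of_fst L hL (a.2, a.1) (b.2, b.1)
        (le_of_eq (by simp only []; rw [ha.1, hb.1]; ring))
    have : (1 + Real.sqrt 2) * L ≤ (1 + Real.sqrt 2) * dist2 a b := by nlinarith
    linarith
end

section
/- Let P be a finite set of points in the plane in general position and let φ = v₀, …, v_k be a light path in the θ₄-graph of P. If v_{j+1} = n₀(v_j) is a 0-edge of φ, then every vertex v_l with l > j+1 lies strictly below the line of slope +1 through v_{j+1}. -/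
open scoped BigOperators

/-- A path in the θ₄-graph that follows only `0`- and `1`-edges. -/
def FollowsZeroOne (P : Finset (ℝ × ℝ)) (k : ℕ) (v : ℕ → ℝ × ℝ) : Prop :=
  v 0 ∈ P ∧ ∀ j < k, IsNbr P 0 (v j) (v (j + 1)) ∨ IsNbr P 1 (v j) (v (j + 1))

/-- A light path: it follows only `0`- and `1`-edges, and for every `0`-edge
`(v j, n₀(v j))`, no edge of the path crosses the horizontal ray emanating from `v j`
to the right. -/
def LightPath (P : Finset (ℝ × ℝ)) (k : ℕ) (v : ℕ → ℝ × ℝ) : Prop :=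
  FollowsZeroOne P k v ∧
  ∀ j < k, IsNbr P 0 (v j) (v (j + 1)) →
    ∀ l < k, ∀ z ∈ segment ℝ (v l) (v (l + 1)), ¬ (z.2 = (v j).2 ∧ (v j).1 < z.1)

/-- In a light path, after a `0`-edge `(v j, v (j+1))`, every later vertex lies strictly
below the line of slope `+1` through `v (j+1)`. -/
theorem light_path_below_diagonal (P : Finset (ℝ × ℝ)) (hP : GenPos P)
    (k : ℕ) (v : ℕ → ℝ × ℝ) (hlight : LightPath P k v)
    (j : ℕ) (hj : j < k) (h0 : IsNbr P 0 (v j) (v (j + 1))) :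
    ∀ l : ℕ, j + 1 < l → l ≤ k →
      (v l).2 - (v l).1 < (v (j + 1)).2 - (v (j + 1)).1 := by
  obtain ⟨⟨hv0, hfol⟩, hlightC⟩ := hlight
  -- every vertex is in P
  have hmem : ∀ l, l ≤ k → v l ∈ P := by
    intro l hl
    induction l with
    | zero => exact hv0
    | succ n ih =>
      rcases hfol n (by omega) with h | h
      · exact h.1
      · exact h.1
  -- x-coordinate strictly increases along the path
  have hx : ∀ l, l < k → (v l).1 < (v (l + 1)).1 := by
    intro l hl
    rcases hfol l hl with h | h
    · have := h.2.1; simp only [cone, if_pos rfl] at this; exact this.1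
    · have := h.2.1; simp [cone] at this; exact this.1
  have hxmono : ∀ a b : ℕ, a < b → b ≤ k → (v a).1 < (v b).1 := by
    intro a b hab hbk
    induction b with
    | zero => omega
    | succ n ih =>
      rcases Nat.lt_or_ge a n with h | h
      · exact lt_trans (ih h (by omega)) (hx n (by omega))
      · have : a = n := by omega
        subst this; exact hx a (by omega)
  have hcone0 := h0.2.1
  simp only [cone, if_pos rfl] at hcone0
  -- every vertex after the 0-edge lies strictly below y = (v j).2
  have hbelow : ∀ l, j + 1 ≤ l → l ≤ k → (v l).2 < (v j).2 := by
    intro l hl hlk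
    induction l with
    | zero => omega
    | succ n ih =>
      rcases Nat.lt_or_ge j n with hjn | hjn
      · -- n ≥ j+1, so (v n).2 < (v j).2 by ih
        have hn2 : (v n).2 < (v j).2 := ih (by omega) (by omega)
        by_contra hcon
        push_neg at hcon
        -- v (n+1) ≠ v j since x-coordinates differ
        have hne : v (n + 1) ≠ v j := by
          intro he
          have := hxmono j (n + 1) (by omega) hlk
          rw [he] at this; exact lt_irrefl _ this
        have hy2 : (v (n + 1)).2 ≠ (v j).2 :=
          fun he => ((hP _ (hmem _ hlk) _ (hmem j (by omega)) hne).2.1) he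
        have hgt : (v j).2 < (v (n + 1)).2 := lt_of_le_of_ne hcon (Ne.symm hy2)
        -- the edge (v n, v (n+1)) crosses the horizontal ray from v j
        set t : ℝ := ((v j).2 - (v n).2) / ((v (n + 1)).2 - (v n).2) with ht
        have hden : (0:ℝ) < (v (n + 1)).2 - (v n).2 := by linarith
        have ht0 : 0 < t := div_pos (by linarith) hden
        have ht1 : t < 1 := (div_lt_one hden).2 (by linarith)
        set z : ℝ × ℝ := (1 - t) • v n + t • v (n + 1) with hz
        have hzseg : z ∈ segment ℝ (v n) (v (n + 1)) :=
          ⟨1 - t, t, by linarith, by linarith, by ring, rfl⟩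
        have hz2 : z.2 = (v j).2 := by
          have : z.2 = (1 - t) * (v n).2 + t * (v (n + 1)).2 := rfl
          rw [this, ht]
          field_simp
          ring
        have hz1 : (v j).1 < z.1 := by
          have hz1e : z.1 = (1 - t) * (v n).1 + t * (v (n + 1)).1 := rfl
          have hn1 : (v j).1 < (v n).1 := hxmono j n (by omega) (by omega)
          have hn1' : (v j).1 < (v (n + 1)).1 := hxmono j (n + 1) (by omega) hlk
          rw [hz1e]
          nlinarith
        exact hlightC j hj h0 n (by omega) z hzseg ⟨hz2, hz1⟩
      · -- n = j : base case of the induction, use the cone of the 0-edge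
        have : n = j := by omega
        subst this; exact hcone0.2
  -- main argument: v l ∈ C₀(v j) and minimality of v (j+1)
  intro l hl hlk
  have hlcone : cone 0 (v j) (v l) := by
    simp only [cone, if_pos rfl]
    exact ⟨hxmono j l (by omega) hlk, hbelow l (by omega) hlk⟩
  have hmin := h0.2.2 (v l) (hmem l hlk) hlcone
  simp only [dist1] at hmin
  have ha1 : |(v j).1 - (v (j + 1)).1| = (v (j + 1)).1 - (v j).1 := by
    rw [abs_of_neg (by linarith [hcone0.1])]; ring
  have ha2 : |(v j).2 - (v (j + 1)).2| = (v j).2 - (v (j + 1)).2 :=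
    abs_of_pos (by linarith [hcone0.2])
  have hlx : (v j).1 < (v l).1 := hxmono j l (by omega) hlk
  have hly : (v l).2 < (v j).2 := hbelow l (by omega) hlk
  have ha3 : |(v j).1 - (v l).1| = (v l).1 - (v j).1 := by
    rw [abs_of_neg (by linarith)]; ring
  have ha4 : |(v j).2 - (v l).2| = (v j).2 - (v l).2 := abs_of_pos (by linarith)
  rw [ha1, ha2, ha3, ha4] at hmin
  -- strictness from general position
  have hne : v l ≠ v (j + 1) := by
    intro he
    have := hxmono (j + 1) l hl hlk
    rw [he] at this; exact lt_irrefl _ this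
  have hstr : (v l).2 - (v l).1 ≠ (v (j + 1)).2 - (v (j + 1)).1 :=
    (hP _ (hmem l hlk) _ (hmem (j + 1) (by omega)) hne).2.2.1
  rcases lt_or_gt_of_ne hstr with h | h
  · exact h
  · linarith
end

section
/- Let s and t be points in the plane with t ∈ C₀(s) (i.e., tₓ > sₓ and t_y < s_y). Let s⊥ be the orthogonal projection of s onto the line ℓ⁺_t of slope +1 through t, and let ρ be the perpendicular bisector of the segment s s⊥. Then for every point y ∈ C₀(s): ‖s−t‖₁ ≤ 2·‖s−y‖₁ if and only if y lies in the closed half-plane bounded by ρ that does not contain s. -/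
open scoped BigOperators

/-- The orthogonal projection of `s` onto the line `ℓ⁺_t` of slope `+1` through `t`. -/
noncomputable def projOnLplus (s t : ℝ × ℝ) : ℝ × ℝ :=
  ((s.1 + s.2 - (t.2 - t.1)) / 2, (s.1 + s.2 + (t.2 - t.1)) / 2)

/-- For `t ∈ C₀(s)` and `y ∈ C₀(s)`: `‖s−t‖₁ ≤ 2·‖s−y‖₁` iff `y` lies in the closed
half-plane bounded by the perpendicular bisector `ρ` of `s` and its projection `s⊥` onto
`ℓ⁺_t` that does not contain `s` (i.e. `y` is at least as close to `s⊥` as to `s`). -/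
theorem bisector_halfplane_characterization (s t : ℝ × ℝ) (hst : cone 0 s t)
    (y : ℝ × ℝ) (hy : cone 0 s y) :
    dist1 s t ≤ 2 * dist1 s y ↔ dist2 y (projOnLplus s t) ≤ dist2 y s := by
  obtain ⟨h1, h2⟩ : s.1 < t.1 ∧ t.2 < s.2 := hst
  obtain ⟨h3, h4⟩ : s.1 < y.1 ∧ y.2 < s.2 := hy
  have e1 : dist1 s t = (t.1 - s.1) + (s.2 - t.2) := by
    simp [dist1, abs_of_neg (by linarith : s.1 - t.1 < 0), abs_of_pos (by linarith : (0:ℝ) < s.2 - t.2)]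
  have e2 : dist1 s y = (y.1 - s.1) + (s.2 - y.2) := by
    simp [dist1, abs_of_neg (by linarith : s.1 - y.1 < 0), abs_of_pos (by linarith : (0:ℝ) < s.2 - y.2)]
  rw [e1, e2, dist2, dist2, projOnLplus]
  rw [Real.sqrt_le_sqrt_iff (by positivity)]
  constructor
  · intro h; nlinarith [sq_nonneg (t.1 - s.1 + s.2 - t.2)]
  · intro h; nlinarith [sq_nonneg (t.1 - s.1 + s.2 - t.2), mul_pos (by linarith : (0:ℝ) < t.1 - s.1 + s.2 - t.2) (by linarith : (0:ℝ) < t.1 - s.1 + s.2 - t.2)]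
end

section
/- Let P be a finite set of points in the plane in general position and let s, t ∈ P with t ∈ C₀(s). Suppose the top-right quadrant of S_t(s) is empty, s is t-protected, and the interior of the smallest axis-aligned rectangle R enclosing s and t contains no t-protected point of P. Then the interior of R contains no point of P at all. -/
open scoped BigOperators

/-- Base case of Lemma 1: if `t ∈ C₀(s)`, the top-right quadrant of `S_t(s)` is empty,
`s` is `t`-protected, and the open rectangle `R` spanned by `s` and `t` contains no
`t`-protected point of `P`, then `R` contains no point of `P` at all. -/
theorem base_case_rectangle_empty (P : Finset (ℝ × ℝ)) (hP : GenPos P) (s t : ℝ × ℝ)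
    (hs : s ∈ P) (ht : t ∈ P) (hcone : cone 0 s t)
    (hempty : ∀ q ∈ P,
      ¬ (t.1 < q.1 ∧ q.1 < t.1 + distInf s t ∧ t.2 < q.2 ∧ q.2 < t.2 + distInf s t))
    (hprot : TProtected P t s)
    (hnoprot : ∀ q ∈ P, TProtected P t q →
      ¬ (s.1 < q.1 ∧ q.1 < t.1 ∧ t.2 < q.2 ∧ q.2 < s.2)) :
    ∀ q ∈ P, ¬ (s.1 < q.1 ∧ q.1 < t.1 ∧ t.2 < q.2 ∧ q.2 < s.2) := by
  intro q0 hq0 hq0R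
  have hne : (P.filter (fun q => s.1 < q.1 ∧ q.1 < t.1 ∧ t.2 < q.2 ∧ q.2 < s.2)).Nonempty :=
    ⟨q0, Finset.mem_filter.2 ⟨hq0, hq0R⟩⟩
  obtain ⟨q, hqmem, hqmax⟩ := Finset.exists_max_image _ (fun q => q.1 + q.2) hne
  rw [Finset.mem_filter] at hqmem
  obtain ⟨hqP, hqR⟩ := hqmem
  refine hnoprot q hqP ?_ hqR
  intro r hrP hrc
  norm_num [cone] at hrc
  by_contra hle
  push_neg at hle
  have hrs : r ≠ s := by
    intro h; subst h; exact absurd hrc.1 (by linarith [hqR.1])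
  have hrt : r ≠ t := by
    intro h; subst h; exact absurd hrc.2 (by linarith [hqR.2.2.1])
  have h1 : r.1 ≠ t.1 := ((hP r hrP t ht hrt).1)
  have h2 : r.2 ≠ s.2 := ((hP r hrP s hs hrs).2.1)
  rcases lt_or_gt_of_ne h1 with h1lt | h1gt
  · rcases lt_or_gt_of_ne h2 with h2lt | h2gt
    · have hrR : s.1 < r.1 ∧ r.1 < t.1 ∧ t.2 < r.2 ∧ r.2 < s.2 :=
        ⟨by linarith [hqR.1, hrc.1], h1lt, by linarith [hqR.2.2.1, hrc.2], h2lt⟩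
      have := hqmax r (Finset.mem_filter.2 ⟨hrP, hrR⟩)
      linarith [hrc.1, hrc.2]
    · have : cone 1 s r := by
        norm_num [cone]
        exact ⟨by linarith [hqR.1, hrc.1], h2gt⟩
      linarith [hprot r hrP this]
  · linarith [hqR.2.2.1, hrc.2]
end
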